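/- arXiv:1408.4185 — 5 statements merged into one kernel-verified Lean document; each statement's English description precedes it below -/
import Mathlib

section
/- Let λ ∈ ℂ with λ ∉ ℤ. The vector space with basis {u_j : j ∈ ℤ + λ}, on which the Weyl algebra A₁ (with relation βγ − γβ = −1) acts by γ u_j = u_{j−1} and β u_j = j u_{j+1}, is a simple A₁-module on which J = γβ acts diagonally with J u_j = j u_j. -/
/- For λ ∈ ℂ \ ℤ, the vector space with basis {u_j : j ∈ ℤ + λ}
   (here the basis vector indexed by n : ℤ represents u_{λ+n}),
   with γ u_j = u_{j−1} and β u_j = j u_{j+1}, is a simple module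
   over the Weyl algebra A₁ ([β,γ] = −1) and J = γβ acts diagonally. -/

abbrev TypV := ℤ →₀ ℂ

/-- β acting on basis vectors: β u_{λ+n} = (λ+n) u_{λ+n+1}. -/
noncomputable def bAct (lam : ℂ) : TypV →ₗ[ℂ] TypV :=
  Finsupp.linearCombination ℂ (fun n : ℤ => (lam + n) • Finsupp.single (n + 1) (1 : ℂ))

/-- γ acting on basis vectors: γ u_{λ+n} = u_{λ+n−1}. -/
noncomputable def gAct : TypV →ₗ[ℂ] TypV :=
  Finsupp.linearCombination ℂ (fun n : ℤ => Finsupp.single (n - 1) (1 : ℂ))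


lemma bAct_single (lam : ℂ) (n : ℤ) :
    bAct lam (Finsupp.single n (1:ℂ)) = (lam + n) • Finsupp.single (n+1) (1:ℂ) := by
  rw [bAct, Finsupp.linearCombination_single, one_smul]

lemma gAct_single (n : ℤ) :
    gAct (Finsupp.single n (1:ℂ)) = Finsupp.single (n-1) (1:ℂ) := by
  rw [gAct, Finsupp.linearCombination_single, one_smul]

lemma J_single (lam : ℂ) (n : ℤ) :
    gAct (bAct lam (Finsupp.single n (1:ℂ))) = (lam + n) • Finsupp.single n (1:ℂ) := by
  rw [bAct_single, map_smul, gAct_single]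
  norm_num

lemma single_eq_smul (a : ℤ) (b : ℂ) :
    (Finsupp.single a b : TypV) = b • Finsupp.single a (1:ℂ) := by
  rw [Finsupp.smul_single, smul_eq_mul, mul_one]

lemma J_apply (lam : ℂ) (v : TypV) (n : ℤ) :
    gAct (bAct lam v) n = (lam + n) * v n := by
  induction v using Finsupp.induction_linear with
  | zero => simp
  | add f g hf hg => simp [map_add, Finsupp.add_apply, hf, hg, mul_add]
  | single a b =>
    rw [single_eq_smul, map_smul, map_smul, J_single]
    rcases eq_or_ne a n with h | h
    · subst h
      simp only [Finsupp.smul_apply, Finsupp.single_eq_same, smul_eq_mul]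
      ring
    · simp [Finsupp.single_apply, h]

lemma weyl_single (lam : ℂ) (a : ℤ) :
    bAct lam (gAct (Finsupp.single a (1:ℂ))) - gAct (bAct lam (Finsupp.single a (1:ℂ)))
      = -(Finsupp.single a (1:ℂ)) := by
  rw [gAct_single, bAct_single, J_single, show a - 1 + 1 = a from by ring, ← sub_smul]
  rw [show lam + ((a:ℤ) - 1 : ℤ) - (lam + a) = -1 from by push_cast; ring]
  simp

lemma weyl (lam : ℂ) (v : TypV) :
    bAct lam (gAct v) - gAct (bAct lam v) = -v := by
  induction v using Finsupp.induction_linear with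
  | zero => simp
  | add f g hf hg =>
    simp only [map_add] at *
    rw [add_sub_add_comm, hf, hg]; abel
  | single a b =>
    rw [single_eq_smul]
    simp only [map_smul, ← smul_sub, weyl_single, smul_neg]

theorem typical_module_simple (lam : ℂ) (hlam : ∀ k : ℤ, lam ≠ (k : ℂ)) :
    -- the Weyl relation [β, γ] = −1 holds
    (∀ v : TypV, bAct lam (gAct v) - gAct (bAct lam v) = -v) ∧
    -- J = γβ acts diagonally: J u_j = j u_j  (j = λ + n)
    (∀ n : ℤ, gAct (bAct lam (Finsupp.single n (1 : ℂ))) =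
        (lam + n) • Finsupp.single n (1 : ℂ)) ∧
    -- simplicity
    (∀ N : Submodule ℂ TypV,
      (∀ v ∈ N, bAct lam v ∈ N) → (∀ v ∈ N, gAct v ∈ N) → N = ⊥ ∨ N = ⊤) := by
  refine ⟨weyl lam, J_single lam, ?_⟩
  intro N hb hg
  by_cases hN : N = ⊥
  · exact Or.inl hN
  right
  have hlam' : ∀ j : ℤ, lam + (j:ℂ) ≠ 0 := by
    intro j h
    rw [add_eq_zero_iff_eq_neg] at h
    exact hlam (-j) (by push_cast; exact h)
  have key : ∀ s : ℕ, ∀ v ∈ N, v ≠ 0 → v.support.card = s →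
      ∃ n : ℤ, ∃ c : ℂ, c ≠ 0 ∧ Finsupp.single n c ∈ N := by
    intro s
    induction s using Nat.strong_induction_on with
    | _ s ih =>
      intro v hvN hv0 hcard
      obtain ⟨n, hn⟩ := Finsupp.support_nonempty_iff.mpr hv0
      by_cases hone : v.support.card = 1
      · obtain ⟨a, ha0, hv⟩ := Finsupp.card_support_eq_one.mp hone
        exact ⟨a, v a, ha0, hv ▸ hvN⟩
      · have h2 : 1 < v.support.card := by
          have := Finset.card_pos.mpr ⟨n, hn⟩
          omega
        obtain ⟨m, hm, hmn⟩ := Finset.exists_mem_ne h2 n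
        set w : TypV := gAct (bAct lam v) - (lam + m) • v with hw
        have hwN : w ∈ N := N.sub_mem (hg _ (hb _ hvN)) (N.smul_mem _ hvN)
        have hwapp : ∀ k : ℤ, w k = ((k:ℂ) - m) * v k := by
          intro k
          simp only [hw, Finsupp.sub_apply, Finsupp.smul_apply, J_apply, smul_eq_mul]
          ring
        have hwn : w n ≠ 0 := by
          rw [hwapp]
          refine mul_ne_zero ?_ (Finsupp.mem_support_iff.mp hn)
          intro h
          have : (n:ℂ) = m := sub_eq_zero.mp h
          exact hmn (by exact_mod_cast this.symm)
        have hw0 : w ≠ 0 := fun h => hwn (by simp [h])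
        have hwm : w m = 0 := by rw [hwapp]; simp
        have hsub : w.support ⊂ v.support := by
          constructor
          · intro k hk
            rw [Finsupp.mem_support_iff] at hk ⊢
            intro h
            exact hk (by rw [hwapp, h, mul_zero])
          · intro h
            exact (Finsupp.mem_support_iff.mp (h hm)) hwm
        exact ih w.support.card (hcard ▸ Finset.card_lt_card hsub) w hwN hw0 rfl
  obtain ⟨v, hvN, hv0⟩ : ∃ v ∈ N, v ≠ 0 := by
    by_contra h
    push_neg at h
    exact hN ((Submodule.eq_bot_iff N).mpr h)
  obtain ⟨n, c, hc, hcN⟩ := key v.support.card v hvN hv0 rfl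
  have hn1 : Finsupp.single n (1:ℂ) ∈ N := by
    have := N.smul_mem c⁻¹ hcN
    rwa [Finsupp.smul_single, smul_eq_mul, inv_mul_cancel₀ hc] at this
  have up : ∀ j : ℤ, Finsupp.single j (1:ℂ) ∈ N → Finsupp.single (j+1) (1:ℂ) ∈ N := by
    intro j hj
    have h1 := hb _ hj
    rw [bAct_single] at h1
    have h2 := N.smul_mem (lam + j)⁻¹ h1
    rwa [smul_smul, inv_mul_cancel₀ (hlam' j), one_smul] at h2
  have down : ∀ j : ℤ, Finsupp.single j (1:ℂ) ∈ N → Finsupp.single (j-1) (1:ℂ) ∈ N := by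
    intro j hj
    have := hg _ hj
    rwa [gAct_single] at this
  have upN : ∀ k : ℕ, Finsupp.single (n + (k:ℤ)) (1:ℂ) ∈ N := by
    intro k
    induction k with
    | zero => simpa using hn1
    | succ k ihk =>
        have := up _ ihk
        rwa [show n + (k:ℤ) + 1 = n + ((k:ℕ)+1 : ℕ) from by push_cast; ring] at this
  have downN : ∀ k : ℕ, Finsupp.single (n - (k:ℤ)) (1:ℂ) ∈ N := by
    intro k
    induction k with
    | zero => simpa using hn1
    | succ k ihk =>
        have := down _ ihk
        rwa [show n - (k:ℤ) - 1 = n - ((k:ℕ)+1 : ℕ) from by push_cast; ring] at this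
  have all : ∀ m : ℤ, Finsupp.single m (1:ℂ) ∈ N := by
    intro m
    rcases le_or_gt n m with h | h
    · have := upN (m - n).toNat
      rwa [show n + (((m - n).toNat : ℕ) : ℤ) = m from by omega] at this
    · have := downN (n - m).toNat
      rwa [show n - (((n - m).toNat : ℕ) : ℤ) = m from by omega] at this
  have allv : ∀ x : TypV, x ∈ N := by
    intro x
    induction x using Finsupp.induction with
    | zero => exact N.zero_mem
    | single_add a b f _ _ ihf =>
        refine N.add_mem ?_ ihf
        rw [single_eq_smul]
        exact N.smul_mem b (all a)
  rw [eq_top_iff]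
  exact fun x _ => allv x
end

section
/- A simple weight module over the Weyl algebra A₁ (with [β, γ] = −1) whose weight spaces for J = γβ are the eigenspaces of J has all its nonzero weight spaces one-dimensional. -/
theorem simple_weight_module_one_dim_weight_spaces
    (M : Type*) [AddCommGroup M] [Module ℂ M]
    (B G : M →ₗ[ℂ] M)
    -- the Weyl relation βγ − γβ = −1
    (hW : B ∘ₗ G - G ∘ₗ B = -LinearMap.id)
    (J : Module.End ℂ M) (hJ : J = G ∘ₗ B)
    -- weight module: M is the (direct) sum of the J-eigenspaces
    (hweight : (⨆ c : ℂ, Module.End.eigenspace J c) = ⊤)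
    -- simplicity: the only invariant submodules are ⊥ and ⊤, and M ≠ 0
    (hnontriv : Nontrivial M)
    (hsimple : ∀ N : Submodule ℂ M,
      (∀ v ∈ N, B v ∈ N) → (∀ v ∈ N, G v ∈ N) → N = ⊥ ∨ N = ⊤) :
    -- every weight space is at most one-dimensional
    ∀ c : ℂ, ∀ v ∈ Module.End.eigenspace J c, ∀ w ∈ Module.End.eigenspace J c,
      ∃ a b : ℂ, (a ≠ 0 ∨ b ≠ 0) ∧ a • v + b • w = 0 := by
  intro c v hv w hw
  rcases eq_or_ne v 0 with rfl | hv0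
  · exact ⟨1, 0, Or.inl one_ne_zero, by simp⟩
  -- pointwise Weyl relation
  have hWp : ∀ x : M, B (G x) = G (B x) - x := by
    intro x
    have h := LinearMap.ext_iff.mp hW x
    simp only [LinearMap.sub_apply, LinearMap.coe_comp, Function.comp_apply,
      LinearMap.neg_apply, LinearMap.id_apply] at h
    linear_combination (norm := abel) h
  have hJp : ∀ x : M, J x = G (B x) := by
    intro x; rw [hJ]; rfl
  -- B raises weight by 1, G lowers by 1
  have hBe : ∀ (j : ℂ) (x : M), x ∈ Module.End.eigenspace J j →
      B x ∈ Module.End.eigenspace J (j + 1) := by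
    intro j x hx
    rw [Module.End.mem_eigenspace_iff] at hx ⊢
    have h1 : B (G (B x)) = G (B (B x)) - B x := hWp (B x)
    have h2 : G (B x) = j • x := by rw [← hJp]; exact hx
    rw [hJp]
    have : G (B (B x)) = B (G (B x)) + B x := by rw [h1]; abel
    rw [this, h2, map_smul]
    rw [add_smul, one_smul]
  have hGe : ∀ (j : ℂ) (x : M), x ∈ Module.End.eigenspace J j →
      G x ∈ Module.End.eigenspace J (j - 1) := by
    intro j x hx
    rw [Module.End.mem_eigenspace_iff] at hx ⊢
    have h2 : G (B x) = j • x := by rw [← hJp]; exact hx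
    have h1 : B (G x) = j • x - x := by rw [hWp x, h2]
    rw [hJp, h1, map_sub, map_smul, sub_smul, one_smul]
  -- powers of B and G applied to v
  have hBn : ∀ n : ℕ, (B ^ n) v ∈ Module.End.eigenspace J (c + n) := by
    intro n
    induction n with
    | zero => simpa using hv
    | succ n ih =>
      have : (B ^ (n + 1)) v = B ((B ^ n) v) := by
        rw [pow_succ']; rfl
      rw [this]
      have := hBe _ _ ih
      convert this using 2
      push_cast; ring
  have hGn : ∀ n : ℕ, (G ^ n) v ∈ Module.End.eigenspace J (c - n) := by
    intro n
    induction n with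
    | zero => simpa using hv
    | succ n ih =>
      have : (G ^ (n + 1)) v = G ((G ^ n) v) := by
        rw [pow_succ']; rfl
      rw [this]
      have := hGe _ _ ih
      convert this using 2
      push_cast; ring
  -- the family
  set e : ℤ → M := fun n => if 0 ≤ n then (B ^ n.toNat) v else (G ^ (-n).toNat) v with he_def
  have he0 : e 0 = v := by simp [he_def]
  have he : ∀ n : ℤ, e n ∈ Module.End.eigenspace J (c + n) := by
    intro n
    by_cases hn : 0 ≤ n
    · have h := hBn n.toNat
      have hc : ((n.toNat : ℕ) : ℂ) = (n : ℂ) := by exact_mod_cast Int.toNat_of_nonneg hn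
      rw [hc] at h
      simpa only [he_def, if_pos hn] using h
    · have := hGn (-n).toNat
      simp only [he_def, if_neg hn]
      convert this using 2
      have : ((-n).toNat : ℂ) = (-n : ℤ) := by
        norm_cast
        exact Int.toNat_of_nonneg (by omega)
      rw [this]; push_cast; ring
  set N : Submodule ℂ M := Submodule.span ℂ (Set.range e) with hN_def
  have heN : ∀ n : ℤ, e n ∈ N := fun n => Submodule.subset_span ⟨n, rfl⟩
  -- B stability on generators
  have hBgen : ∀ n : ℤ, B (e n) ∈ N := by
    intro n
    by_cases hn : 0 ≤ n
    · have h1 : B (e n) = e (n + 1) := by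
        simp only [he_def, if_pos hn, if_pos (by omega : (0:ℤ) ≤ n + 1)]
        have : (n + 1).toNat = n.toNat + 1 := by omega
        rw [this, pow_succ']; rfl
      rw [h1]; exact heN _
    · -- n < 0 : e n = G (e (n+1)), and B (G y) = (G B - 1) y = ((c + n + 1) - 1) • y
      have hm : e n = G (e (n + 1)) := by
        by_cases hn1 : 0 ≤ n + 1
        · have hn0 : n + 1 = 0 := by omega
          simp only [he_def, if_neg hn, hn0, if_pos le_rfl]
          have : (-n).toNat = 1 := by omega
          rw [this]
          simp
        · simp only [he_def, if_neg hn, if_neg hn1]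
          have : (-n).toNat = (-(n + 1)).toNat + 1 := by omega
          rw [this, pow_succ']; rfl
      have hy := he (n + 1)
      rw [Module.End.mem_eigenspace_iff] at hy
      have hGB : G (B (e (n + 1))) = (c + (n + 1)) • e (n + 1) := by
        rw [← hJp]
        convert hy using 2
        push_cast; ring
      have : B (e n) = (c + n) • e (n + 1) := by
        rw [hm, hWp, hGB]
        have hc : (c + ((n : ℂ) + 1)) = (c + n) + 1 := by ring
        push_cast
        rw [hc, add_smul, one_smul]
        abel
      rw [this]
      exact Submodule.smul_mem _ _ (heN _)
  have hGgen : ∀ n : ℤ, G (e n) ∈ N := by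
    intro n
    by_cases hn : 0 < n
    · -- e n = B (e (n-1)), G (B y) = J y = (c + n - 1) • y
      have hm : e n = B (e (n - 1)) := by
        simp only [he_def, if_pos hn.le, if_pos (by omega : (0:ℤ) ≤ n - 1)]
        have : n.toNat = (n - 1).toNat + 1 := by omega
        rw [this, pow_succ']; rfl
      have hy := he (n - 1)
      rw [Module.End.mem_eigenspace_iff] at hy
      have : G (e n) = (c + (n - 1)) • e (n - 1) := by
        rw [hm, ← hJp]
        convert hy using 2
        push_cast; ring
      rw [this]
      exact Submodule.smul_mem _ _ (heN _)
    · have hen : e n = (G ^ (-n).toNat) v := by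
        by_cases h0 : n = 0
        · subst h0; simpa using he0
        · simp only [he_def, if_neg (by omega : ¬ (0:ℤ) ≤ n)]
      have h1 : G (e n) = e (n - 1) := by
        rw [hen]
        simp only [he_def, if_neg (by omega : ¬ (0:ℤ) ≤ n - 1)]
        have : (-(n - 1)).toNat = (-n).toNat + 1 := by omega
        rw [this, pow_succ']; rfl
      rw [h1]; exact heN _
  -- N is invariant, so N = ⊤
  have hNB : ∀ x ∈ N, B x ∈ N := by
    intro x hx
    have : N.map B ≤ N := by
      rw [hN_def, Submodule.map_span, Submodule.span_le]
      rintro _ ⟨_, ⟨n, rfl⟩, rfl⟩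
      exact hBgen n
    exact this (Submodule.mem_map_of_mem hx)
  have hNG : ∀ x ∈ N, G x ∈ N := by
    intro x hx
    have : N.map G ≤ N := by
      rw [hN_def, Submodule.map_span, Submodule.span_le]
      rintro _ ⟨_, ⟨n, rfl⟩, rfl⟩
      exact hGgen n
    exact this (Submodule.mem_map_of_mem hx)
  have hNtop : N = ⊤ := by
    rcases hsimple N hNB hNG with h | h
    · exfalso
      apply hv0
      have : v ∈ N := he0 ▸ heN 0
      rw [h] at this
      simpa using this
    · exact h
  -- w is a combination of the e n
  have hwN : w ∈ N := hNtop ▸ Submodule.mem_top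
  rw [hN_def] at hwN
  rw [Finsupp.mem_span_range_iff_exists_finsupp] at hwN
  obtain ⟨f, hf⟩ := hwN
  -- the component away from weight c
  set u : M := w - f 0 • v with hu_def
  have hu1 : u ∈ Module.End.eigenspace J c :=
    Submodule.sub_mem _ hw (Submodule.smul_mem _ _ hv)
  have hu2 : u ∈ ⨆ (c' : ℂ) (_ : c' ≠ c), Module.End.eigenspace J c' := by
    have hsum : u = ∑ n ∈ f.support.erase 0, f n • e n := by
      rw [hu_def, ← hf, Finsupp.sum, ← he0]
      by_cases h0 : (0 : ℤ) ∈ f.support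
      · rw [← Finset.add_sum_erase _ _ h0]
        abel
      · rw [Finset.erase_eq_of_notMem h0]
        have : f 0 = 0 := Finsupp.notMem_support_iff.mp h0
        rw [this, zero_smul, sub_zero]
    rw [hsum]
    apply Submodule.sum_mem
    intro n hn
    have hn0 : n ≠ 0 := Finset.ne_of_mem_erase hn
    have hne : (c + n : ℂ) ≠ c := by
      intro h
      apply hn0
      have : (n : ℂ) = 0 := by linear_combination h
      exact_mod_cast this
    apply Submodule.smul_mem
    exact le_iSup₂ (f := fun (c' : ℂ) (_ : c' ≠ c) => Module.End.eigenspace J c')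
      (c + n) hne (he n)
  have hu0 : u = 0 := by
    have hind := Module.End.eigenspaces_iSupIndep J
    have hd := iSupIndep_def.mp hind c
    exact (Submodule.disjoint_def.mp hd) u hu1 hu2
  refine ⟨f 0, -1, Or.inr (by norm_num), ?_⟩
  have : w = f 0 • v := by
    have := hu0
    rw [hu_def] at this
    linear_combination (norm := abel) this
  rw [this, neg_smul, one_smul]
  abel
end

section
/- The maps S : (θ | ζ | τ) ↦ (θ + ζ²/(2τ) − ζ/(2τ) + ζ/2 + (arg τ − π/2)/(2π) | ζ/τ | −1/τ) and T : (θ | ζ | τ) ↦ (θ + 1/12 | ζ | τ + 1), acting on ℂ × ℂ × ℍ (ℍ the upper half-plane, arg τ ∈ (0, π)), satisfy: S² and (ST)³ both equal the map C : (θ | ζ | τ) ↦ (θ + ζ | −ζ | τ), and C² is the identity. Hence S and T generate an action of SL(2, ℤ). -/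
open Complex Real


lemma my_arg_pos {z : ℂ} (h : 0 < z.im) : 0 < z.arg := by
  rcases (Complex.arg_nonneg_iff.mpr h.le).lt_or_eq with h1 | h1
  · exact h1
  · exact absurd (Complex.arg_eq_zero_iff.mp h1.symm).2 h.ne'

lemma my_arg_lt_pi {z : ℂ} (h : 0 < z.im) : z.arg < π :=
  Complex.arg_lt_pi_iff.mpr (Or.inr h.ne')

lemma my_arg_neg_inv {z : ℂ} (h : 0 < z.im) : (-1 / z).arg = π - z.arg := by
  have hz : z ≠ 0 := fun hz => by simp [hz] at h
  have h1 : (-1 : ℂ) / z = -(z⁻¹) := by field_simp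
  have h2 : (z⁻¹).im < 0 := by
    rw [Complex.inv_im]
    exact div_neg_of_neg_of_pos (by simpa using h) (Complex.normSq_pos.mpr hz)
  rw [h1, Complex.arg_neg_eq_arg_add_pi_of_im_neg h2, Complex.arg_inv,
    if_neg (by linarith [my_arg_lt_pi h])]
  ring

lemma my_arg_div {z : ℂ} (h : 0 < z.im) : (z / (z + 1)).arg = z.arg - (z + 1).arg := by
  have h1 : 0 < (z + 1).im := by simpa using h
  have hz : z ≠ 0 := fun hz => by simp [hz] at h
  have hz1 : z + 1 ≠ 0 := fun hz => by simp [hz] at h1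
  have hinv : ((z + 1)⁻¹).arg = -(z + 1).arg := by
    rw [Complex.arg_inv, if_neg (by linarith [my_arg_lt_pi h1])]
  have hmem : z.arg + ((z + 1)⁻¹).arg ∈ Set.Ioc (-π) π := by
    rw [hinv]
    constructor
    · linarith [my_arg_lt_pi h1, my_arg_pos h]
    · linarith [my_arg_lt_pi h, my_arg_pos h1, Real.pi_pos]
  rw [div_eq_mul_inv, Complex.arg_mul hz (inv_ne_zero hz1) hmem, hinv, sub_eq_add_neg]


/- The modular maps S, T on ℂ × ℂ × ℍ:
   S : (θ|ζ|τ) ↦ (θ + ζ²/2τ − ζ/2τ + ζ/2 + (arg τ − π/2)/2π | ζ/τ | −1/τ),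
   T : (θ|ζ|τ) ↦ (θ + 1/12 | ζ | τ + 1)
   satisfy S² = (ST)³ = C where C : (θ|ζ|τ) ↦ (θ + ζ | −ζ | τ), and C² = id;
   hence S and T generate an action of SL(2,ℤ). -/

/-- The upper half-plane. -/
def UHP : Type := { τ : ℂ // 0 < τ.im }

lemma UHP.ne_zero (τ : UHP) : τ.1 ≠ 0 := by
  intro h
  have := τ.2
  rw [h] at this
  simp at this

lemma UHP.neg_inv_mem (τ : UHP) : 0 < (-1 / τ.1).im := by
  have h0 : τ.1 ≠ 0 := τ.ne_zero
  have : (-1 / τ.1).im = τ.1.im / Complex.normSq τ.1 := by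
    rw [Complex.div_im]
    simp
    ring
  rw [this]
  exact div_pos τ.2 (Complex.normSq_pos.mpr h0)

lemma UHP.add_one_mem (τ : UHP) : 0 < (τ.1 + 1).im := by
  have := τ.2
  simp [Complex.add_im]
  exact this

/-- The modular S map. -/
noncomputable def modS : ℂ × ℂ × UHP → ℂ × ℂ × UHP :=
  fun x =>
    let θ := x.1; let ζ := x.2.1; let τ := x.2.2
    ⟨θ + ζ ^ 2 / (2 * τ.1) - ζ / (2 * τ.1) + ζ / 2 +
        ((Complex.arg τ.1 : ℂ) - π / 2) / (2 * π),
      ζ / τ.1, ⟨-1 / τ.1, τ.neg_inv_mem⟩⟩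

/-- The modular T map. -/
noncomputable def modT : ℂ × ℂ × UHP → ℂ × ℂ × UHP :=
  fun x => ⟨x.1 + 1 / 12, x.2.1, ⟨x.2.2.1 + 1, x.2.2.add_one_mem⟩⟩

/-- The conjugation map C. -/
def modC : ℂ × ℂ × UHP → ℂ × ℂ × UHP :=
  fun x => ⟨x.1 + x.2.1, -x.2.1, x.2.2⟩

set_option maxHeartbeats 1000000 in
theorem modular_group_action :
    (∀ x, modS (modS x) = modC x) ∧
    (∀ x, modS (modT (modS (modT (modS (modT x))))) = modC x) ∧
    (∀ x, modC (modC x) = x) := by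

  have hπ : (π : ℂ) ≠ 0 := by exact_mod_cast Real.pi_ne_zero
  refine ⟨?_, ?_, ?_⟩
  · rintro ⟨θ, ζ, t, ht⟩
    have ht0 : t ≠ 0 := fun h => by simp [h] at ht
    simp only [modS, modC, Prod.mk.injEq, Subtype.mk.injEq]
    refine ⟨?_, Prod.ext (by field_simp) (Subtype.ext (by field_simp))⟩
    rw [my_arg_neg_inv ht]
    push_cast
    have e1 : (ζ/t)^2/(2*(-1/t)) = -(ζ^2/(2*t)) := by field_simp
    have e2 : (ζ/t)/(2*(-1/t)) = -(ζ/2) := by field_simp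
    rw [e1, e2]
    ring
  · rintro ⟨θ, ζ, t, ht⟩
    have ht0 : t ≠ 0 := fun h => by simp [h] at ht
    have ht1 : 0 < (t + 1).im := by simpa using ht
    have ht10 : t + 1 ≠ 0 := fun h => by simp [h] at ht1
    have e1 : -1 / (t + 1) + 1 = t / (t + 1) := by field_simp; ring
    have e2 : -1 / (t / (t + 1)) + 1 = -1 / t := by field_simp; ring
    simp only [modS, modT, modC, Prod.mk.injEq]
    refine ⟨?_, Prod.ext ?_ (Subtype.ext ?_)⟩
    · rw [e1, e2, my_arg_div ht, my_arg_neg_inv ht]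
      push_cast
      have f0 : ζ/(t+1)/(t/(t+1)) = ζ/t := by field_simp
      have f1 : (ζ/(t+1))^2/(2*(t/(t+1))) = (ζ^2/t)/2 - (ζ^2/(t+1))/2 := by field_simp; ring
      have f2 : (ζ/(t+1))/(2*(t/(t+1))) = (ζ/t)/2 := by field_simp
      have f3 : (ζ/t)^2/(2*(-1/t)) = -((ζ^2/t)/2) := by field_simp
      have f4 : (ζ/t)/(2*(-1/t)) = -(ζ/2) := by field_simp
      have f6 : ζ/(2*(t+1)) = (ζ/(t+1))/2 := by rw [mul_comm, ← div_div]
      have f7 : ζ^2/(2*(t+1)) = (ζ^2/(t+1))/2 := by rw [mul_comm, ← div_div]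
      have f8 : ((↑(t+1).arg : ℂ) - ↑π/2)/(2*↑π) + ((↑t.arg - ↑(t+1).arg) - ↑π/2)/(2*↑π)
          + ((↑π - ↑t.arg) - ↑π/2)/(2*↑π) = -(1/4) := by field_simp; ring
      rw [f0, f1, f2, f3, f4, f6, f7]
      linear_combination f8
    · show ζ / (t + 1) / (-1 / (t + 1) + 1) / (-1 / (-1 / (t + 1) + 1) + 1) = -ζ
      rw [e1, e2]
      field_simp
    · show -1 / (-1 / (-1 / (t + 1) + 1) + 1) = t
      rw [e1, e2]
      field_simp
  · rintro ⟨θ, ζ, τ⟩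
    simp [modC]
end

section
/- In the fusion quotient with basis {w_k : k ∈ ℤ + κ} (κ ∉ ℤ) and operators B, G defined by B w_k = (λ + k) w_{k+1} and G w_k = w_{k−1} (where λ + κ ∈ ℤ), the operators satisfy [B, G] = −1 (Weyl algebra relation), G is surjective, and B annihilates exactly the one-dimensional span of w_{−λ}; consequently this module is isomorphic as a Weyl algebra module to the indecomposable module N₀⁺ characterized by a vector u₀ with B u₀ = 0 and G surjective with all J = GB eigenvalues in ℤ. -/
/- The fusion quotient with basis {w_k : k ∈ ℤ − λ} (λ ∉ ℤ), where
   B w_k = (λ+k) w_{k+1} and G w_k = w_{k−1}.  Encoding: the basis vector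
   indexed by n : ℤ represents w_{n−λ}, so λ + k = n.  Then [B,G] = −1,
   G is surjective, the kernel of B is the one-dimensional span of w_{−λ}
   (index n = 0), J = GB has integer eigenvalues, and the module is
   isomorphic to the indecomposable Weyl-algebra module N₀⁺ (basis
   {Gⁿu₀} ∪ {Bⁿu₁}, B u₀ = 0, G u₁ = u₀). -/

abbrev TV := ℤ →₀ ℂ

/-- B w_{n−λ} = (λ + (n−λ)) w_{n−λ+1} = n w_{(n+1)−λ}. -/
noncomputable def bW : TV →ₗ[ℂ] TV :=
  Finsupp.linearCombination ℂ (fun n : ℤ => (n : ℂ) • Finsupp.single (n + 1) (1 : ℂ))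

/-- G w_{n−λ} = w_{(n−1)−λ}. -/
noncomputable def gW : TV →ₗ[ℂ] TV :=
  Finsupp.linearCombination ℂ (fun n : ℤ => Finsupp.single (n - 1) (1 : ℂ))

abbrev NV := (ℕ ⊕ ℕ) →₀ ℂ

noncomputable def gGen : ℕ ⊕ ℕ → NV
  | Sum.inl n => Finsupp.single (Sum.inl (n + 1)) (1 : ℂ)
  | Sum.inr 0 => Finsupp.single (Sum.inl 0) (1 : ℂ)
  | Sum.inr (n + 1) => ((n : ℂ) + 1) • Finsupp.single (Sum.inr n) (1 : ℂ)

noncomputable def bGen : ℕ ⊕ ℕ → NV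
  | Sum.inl 0 => 0
  | Sum.inl (n + 1) => -(((n : ℂ) + 1) • Finsupp.single (Sum.inl n) (1 : ℂ))
  | Sum.inr n => Finsupp.single (Sum.inr (n + 1)) (1 : ℂ)

noncomputable def gN : NV →ₗ[ℂ] NV := Finsupp.linearCombination ℂ gGen
noncomputable def bN : NV →ₗ[ℂ] NV := Finsupp.linearCombination ℂ bGen

lemma bW_single (n : ℤ) (b : ℂ) : bW (Finsupp.single n b) = Finsupp.single (n+1) (b * n) := by
  simp only [bW, Finsupp.linearCombination_single, smul_smul, Finsupp.smul_single, smul_eq_mul, mul_one]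

lemma gW_single (n : ℤ) (b : ℂ) : gW (Finsupp.single n b) = Finsupp.single (n-1) b := by
  simp only [gW, Finsupp.linearCombination_single, Finsupp.smul_single, smul_eq_mul, mul_one]

-- extensionality from action on unit singles
lemma lhom_ext1 {α : Type*} {M : Type*} [AddCommMonoid M] [Module ℂ M]
    {f g : (α →₀ ℂ) →ₗ[ℂ] M} (h : ∀ a, f (Finsupp.single a 1) = g (Finsupp.single a 1)) :
    f = g := by
  apply Finsupp.lhom_ext
  intro a b
  have hb : (Finsupp.single a b : α →₀ ℂ) = b • Finsupp.single a 1 := by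
    rw [Finsupp.smul_single, smul_eq_mul, mul_one]
  rw [hb, map_smul, map_smul, h a]

noncomputable def fGen : ℤ → NV
  | Int.ofNat 0 => Finsupp.single (Sum.inl 0) 1
  | Int.ofNat (n+1) => ((n.factorial : ℂ))⁻¹ • Finsupp.single (Sum.inr n) 1
  | Int.negSucc n => Finsupp.single (Sum.inl (n+1)) 1

noncomputable def hGen : ℕ ⊕ ℕ → TV
  | Sum.inl n => Finsupp.single (-(n:ℤ)) 1
  | Sum.inr n => (n.factorial : ℂ) • Finsupp.single ((n:ℤ)+1) 1

noncomputable def eW : TV →ₗ[ℂ] NV := Finsupp.linearCombination ℂ fGen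
noncomputable def eInv : NV →ₗ[ℂ] TV := Finsupp.linearCombination ℂ hGen

lemma eW_single (n : ℤ) : eW (Finsupp.single n 1) = fGen n := by
  simp only [eW, Finsupp.linearCombination_single, one_smul]
lemma eInv_single (a : ℕ ⊕ ℕ) : eInv (Finsupp.single a 1) = hGen a := by
  simp only [eInv, Finsupp.linearCombination_single, one_smul]
lemma bN_single (a : ℕ ⊕ ℕ) : bN (Finsupp.single a 1) = bGen a := by
  simp only [bN, Finsupp.linearCombination_single, one_smul]
lemma gN_single (a : ℕ ⊕ ℕ) : gN (Finsupp.single a 1) = gGen a := by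
  simp only [gN, Finsupp.linearCombination_single, one_smul]

lemma comp1 : eInv ∘ₗ eW = LinearMap.id := by
  apply lhom_ext1
  intro n
  rcases n with n | n
  · rcases n with _ | m
    · rw [LinearMap.comp_apply, LinearMap.id_apply, eW_single, fGen, eInv_single, hGen]
      norm_cast
    · rw [LinearMap.comp_apply, LinearMap.id_apply, eW_single, fGen, map_smul, eInv_single, hGen,
        smul_smul, inv_mul_cancel₀ (by exact_mod_cast m.factorial_ne_zero), one_smul]
      congr 1
  · rw [LinearMap.comp_apply, LinearMap.id_apply, eW_single, fGen, eInv_single, hGen]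
    congr 1

lemma comp2 : eW ∘ₗ eInv = LinearMap.id := by
  apply lhom_ext1
  intro a
  rcases a with n | n
  · rcases n with _ | m
    · rw [LinearMap.comp_apply, LinearMap.id_apply, eInv_single, hGen,
        show (-((0:ℕ):ℤ)) = Int.ofNat 0 by norm_num, eW_single, fGen]
    
    · rw [LinearMap.comp_apply, LinearMap.id_apply, eInv_single, hGen]
      rw [show (-(((m+1:ℕ)):ℤ)) = Int.negSucc m by simp [Int.negSucc_eq], eW_single, fGen]
  · rw [LinearMap.comp_apply, LinearMap.id_apply, eInv_single, hGen, map_smul]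
    rw [show (((n:ℕ):ℤ)+1) = Int.ofNat (n+1) by simp [Int.ofNat_eq_natCast], eW_single, fGen,
      smul_smul, mul_inv_cancel₀ (by exact_mod_cast n.factorial_ne_zero), one_smul]

lemma single_mul_smul (n : ℤ) (c : ℂ) : (Finsupp.single n c : TV) = c • Finsupp.single n 1 := by
  rw [Finsupp.smul_single, smul_eq_mul, mul_one]

lemma intertwineB : eW ∘ₗ bW = bN ∘ₗ eW := by
  apply lhom_ext1
  intro n
  rw [LinearMap.comp_apply, LinearMap.comp_apply, bW_single, one_mul, eW_single,
    single_mul_smul, map_smul, eW_single]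
  rcases n with n | n
  · rcases n with _ | m
    · rw [fGen, bN_single, bGen]
      norm_num
    · rw [fGen, show Int.ofNat (m+1) + 1 = Int.ofNat (m+2) by simp only [Int.ofNat_eq_natCast]; push_cast; ring, fGen, map_smul, bN_single, bGen,
        smul_smul]
      congr 1
      rw [show ((Int.ofNat (m+1) : ℤ) : ℂ) = ((m:ℂ)+1) by push_cast [Int.ofNat_eq_natCast]; ring,
        Nat.factorial_succ]
      have h1 : ((m.factorial : ℂ)) ≠ 0 := by exact_mod_cast m.factorial_ne_zero
      have h2 : ((m:ℂ)+1) ≠ 0 := Nat.cast_add_one_ne_zero m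
      push_cast
      field_simp
  · rcases n with _ | k
    · rw [fGen, show Int.negSucc 0 + 1 = Int.ofNat 0 by decide, fGen, bN_single, bGen]
      norm_num
    · rw [fGen, show Int.negSucc (k+1) + 1 = Int.negSucc k by simp only [Int.negSucc_eq]; push_cast; ring, fGen, bN_single, bGen]
      rw [← neg_smul]
      congr 1
      push_cast [Int.negSucc_eq]
      ring

lemma intertwineG : eW ∘ₗ gW = gN ∘ₗ eW := by
  apply lhom_ext1
  intro n
  rw [LinearMap.comp_apply, LinearMap.comp_apply, gW_single, eW_single, eW_single]
  rcases n with n | n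
  · rcases n with _ | m
    · rw [fGen, show (Int.ofNat 0 : ℤ) - 1 = Int.negSucc 0 by decide, fGen, gN_single, gGen]
    · rcases m with _ | k
      · rw [fGen, show (Int.ofNat 1 : ℤ) - 1 = Int.ofNat 0 by decide, fGen, map_smul, gN_single, gGen]
        norm_num
      · rw [fGen, show (Int.ofNat (k+2) : ℤ) - 1 = Int.ofNat (k+1) by simp only [Int.ofNat_eq_natCast]; push_cast; ring, fGen, map_smul,
          gN_single, gGen, smul_smul]
        congr 1
        have h1 : ((k.factorial : ℂ)) ≠ 0 := by exact_mod_cast k.factorial_ne_zero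
        have h2 : ((k:ℂ)+1) ≠ 0 := Nat.cast_add_one_ne_zero k
        rw [Nat.factorial_succ]
        push_cast
        field_simp
  · rw [fGen, show (Int.negSucc n : ℤ) - 1 = Int.negSucc (n+1) by simp only [Int.ofNat_eq_natCast, Int.negSucc_eq]; push_cast; ring, fGen, gN_single, gGen]


noncomputable def sW : TV →ₗ[ℂ] TV :=
  Finsupp.linearCombination ℂ (fun n : ℤ => Finsupp.single (n + 1) (1 : ℂ))

lemma sW_single (n : ℤ) : sW (Finsupp.single n 1) = Finsupp.single (n+1) 1 := by
  simp only [sW, Finsupp.linearCombination_single, one_smul]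

lemma gW_sW : gW ∘ₗ sW = LinearMap.id := by
  apply lhom_ext1
  intro n
  rw [LinearMap.comp_apply, LinearMap.id_apply, sW_single, gW_single, add_sub_cancel_right]

lemma bW_apply (v : TV) (m : ℤ) : bW v (m+1) = v m * m := by
  induction v using Finsupp.induction_linear with
  | zero => simp only [map_zero, Finsupp.coe_zero, Pi.zero_apply, zero_mul]
  | add f g hf hg =>
      rw [show bW (f+g) = bW f + bW g from map_add _ f g, Finsupp.add_apply, hf, hg,
        Finsupp.add_apply]; ring
  | single a b =>
      rw [bW_single, Finsupp.single_apply, Finsupp.single_apply]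
      by_cases h : a = m
      · subst h; rw [if_pos rfl, if_pos rfl]
      · rw [if_neg (by omega), if_neg h, zero_mul]

theorem fusion_quotient_is_N0plus (lam : ℂ) (hlam : ∀ k : ℤ, lam ≠ (k : ℂ)) :
    -- the Weyl relation [B, G] = −1
    (∀ v : TV, bW (gW v) - gW (bW v) = -v) ∧
    -- G is surjective
    Function.Surjective gW ∧
    -- B annihilates exactly the span of w_{−λ} (index n = 0)
    (∀ v : TV, bW v = 0 ↔ ∃ a : ℂ, v = a • Finsupp.single 0 (1 : ℂ)) ∧
    -- J = GB has integer eigenvalues: J w_{n−λ} = n w_{n−λ}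
    (∀ n : ℤ, gW (bW (Finsupp.single n (1 : ℂ))) = (n : ℂ) • Finsupp.single n (1 : ℂ)) ∧
    -- the module is isomorphic to N₀⁺ as a Weyl-algebra module
    (∃ e : TV ≃ₗ[ℂ] NV, (∀ v : TV, e (bW v) = bN (e v)) ∧ (∀ v : TV, e (gW v) = gN (e v))) := by
  refine ⟨?_, ?_, ?_, ?_, ?_⟩
  · -- Weyl relation
    have h : bW ∘ₗ gW - gW ∘ₗ bW = -LinearMap.id := by
      apply lhom_ext1
      intro n
      rw [LinearMap.sub_apply, LinearMap.comp_apply, LinearMap.comp_apply,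
        LinearMap.neg_apply, LinearMap.id_apply, gW_single, bW_single, bW_single, gW_single,
        add_sub_cancel_right, sub_add_cancel, ← Finsupp.single_sub, ← Finsupp.single_neg]
      congr 1
      push_cast
      ring
    intro v
    have := LinearMap.congr_fun h v
    simpa using this
  · -- surjective
    intro v
    exact ⟨sW v, LinearMap.congr_fun gW_sW v⟩
  · -- kernel of B
    intro v
    constructor
    · intro h
      refine ⟨v 0, ?_⟩
      ext m
      rw [Finsupp.smul_apply, Finsupp.single_apply]
      by_cases hm : m = 0
      · subst hm; rw [if_pos rfl, smul_eq_mul, mul_one]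
      · rw [if_neg (by exact fun hh => hm hh.symm), smul_zero]
        have h1 : bW v (m+1) = 0 := by rw [h]; rfl
        rw [bW_apply] at h1
        have h2 : ((m:ℂ)) ≠ 0 := Int.cast_ne_zero.mpr hm
        exact (mul_eq_zero.mp h1).resolve_right h2
    · rintro ⟨a, rfl⟩
      rw [map_smul, bW_single, one_mul]
      simp only [Int.cast_zero, Finsupp.single_zero, smul_zero]
  · -- eigenvalues
    intro n
    rw [bW_single, gW_single, add_sub_cancel_right, one_mul, Finsupp.smul_single, smul_eq_mul, mul_one]
  · -- isomorphism with N0+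
    refine ⟨LinearEquiv.ofLinear eW eInv comp2 comp1, fun v => ?_, fun v => ?_⟩
    · exact LinearMap.congr_fun intertwineB v
    · exact LinearMap.congr_fun intertwineG v
end

section
/- If V is the free abelian group on ℤ × (ℝ/ℤ) with the product [ℓ, λ] ⊠ [m, μ] = [ℓ+m, λ+μ] + [ℓ+m−1, λ+μ], then the subgroup spanned by elements of the form [ℓ, λ] with λ ≠ 0 together with all products [ℓ, λ] ⊠ [m, −λ] is an ideal: the product of any basis element with an element of this subgroup lies again in the subgroup (reflecting that typical and staggered modules form an ideal in the fusion ring). -/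
/- In the free abelian group V on ℤ × (ℝ/ℤ) with the Verlinde product
   [ℓ,λ] ⊠ [m,μ] = [ℓ+m, λ+μ] + [ℓ+m−1, λ+μ], the subgroup W generated by
   the basis elements [ℓ,λ] with λ ≠ 0 together with the elements
   [n,0] + [n−1,0] (the products [ℓ,λ] ⊠ [m,−λ]) is an ideal:
   v ⊠ w ∈ W for every v ∈ V and w ∈ W. -/

abbrev RZ := AddCircle (1 : ℝ)
abbrev VRing := (ℤ × RZ) →₀ ℤ

/-- The Verlinde product, extended ℤ-bilinearly from the basis products. -/
noncomputable def vmul (u v : VRing) : VRing :=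
  u.sum fun a x => v.sum fun b y =>
    (x * y) • (Finsupp.single (a.1 + b.1, a.2 + b.2) (1 : ℤ) +
      Finsupp.single (a.1 + b.1 - 1, a.2 + b.2) (1 : ℤ))

/-- The subgroup spanned by typical basis elements and staggered combinations. -/
noncomputable def W : AddSubgroup VRing :=
  AddSubgroup.closure
    ({v | ∃ (ℓ : ℤ) (lam : RZ), lam ≠ 0 ∧ v = Finsupp.single (ℓ, lam) 1} ∪
     {v | ∃ n : ℤ, v = Finsupp.single (n, (0 : RZ)) 1 + Finsupp.single (n - 1, (0 : RZ)) 1})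

lemma vmul_zero (u : VRing) : vmul u 0 = 0 := by simp [vmul]

lemma zero_vmul (v : VRing) : vmul 0 v = 0 := by simp [vmul]

lemma vmul_add (u v w : VRing) : vmul u (v + w) = vmul u v + vmul u w := by
  unfold vmul
  rw [← Finsupp.sum_add]
  apply Finsupp.sum_congr
  intro a _
  exact Finsupp.sum_add_index' (fun b => by simp) (fun b y1 y2 => by rw [mul_add, add_smul])

lemma vmul_neg (u v : VRing) : vmul u (-v) = - vmul u v := by
  have h := vmul_add u (-v) v
  rw [neg_add_cancel, vmul_zero] at h
  exact eq_neg_of_add_eq_zero_left h.symm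

lemma add_vmul (u v w : VRing) : vmul (u + v) w = vmul u w + vmul v w := by
  unfold vmul
  apply Finsupp.sum_add_index' <;> intro a
  · simp
  · intro x y
    rw [← Finsupp.sum_add]
    apply Finsupp.sum_congr
    intro b _
    rw [add_mul, add_smul]

lemma vmul_single_single (a b : ℤ × RZ) (x y : ℤ) :
    vmul (Finsupp.single a x) (Finsupp.single b y) =
      (x * y) • (Finsupp.single (a.1 + b.1, a.2 + b.2) (1 : ℤ) +
        Finsupp.single (a.1 + b.1 - 1, a.2 + b.2) (1 : ℤ)) := by
  unfold vmul
  rw [Finsupp.sum_single_index (by simp), Finsupp.sum_single_index (by simp)]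

lemma pair_mem (n : ℤ) (κ : RZ) :
    Finsupp.single (n, κ) (1 : ℤ) + Finsupp.single (n - 1, κ) (1 : ℤ) ∈ W := by
  by_cases hκ : κ = 0
  · subst hκ
    exact AddSubgroup.subset_closure (Or.inr ⟨n, rfl⟩)
  · exact add_mem
      (AddSubgroup.subset_closure (Or.inl ⟨n, κ, hκ, rfl⟩))
      (AddSubgroup.subset_closure (Or.inl ⟨n - 1, κ, hκ, rfl⟩))

lemma single_vmul_gen (a : ℤ × RZ) (x : ℤ) (g : VRing)
    (hg : g ∈ ({v | ∃ (ℓ : ℤ) (lam : RZ), lam ≠ 0 ∧ v = Finsupp.single (ℓ, lam) 1} ∪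
     {v | ∃ n : ℤ, v = Finsupp.single (n, (0 : RZ)) 1 + Finsupp.single (n - 1, (0 : RZ)) 1} :
       Set VRing)) :
    vmul (Finsupp.single a x) g ∈ W := by
  rcases hg with ⟨ℓ, lam, _, rfl⟩ | ⟨n, rfl⟩
  · rw [vmul_single_single]
    exact zsmul_mem (pair_mem _ _) _
  · rw [vmul_add, vmul_single_single, vmul_single_single]
    refine add_mem (zsmul_mem ?_ _) (zsmul_mem ?_ _)
    · simpa using pair_mem (a.1 + n) a.2
    · have h : a.1 + (n - 1) = (a.1 + n - 1) := by ring
      simp only [h, add_zero]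
      exact pair_mem (a.1 + n - 1) a.2

theorem typical_staggered_ideal :
    ∀ v : VRing, ∀ w ∈ W, vmul v w ∈ W := by
  intro v w hw
  induction hw using AddSubgroup.closure_induction with
  | mem g hg =>
    induction v using Finsupp.induction with
    | zero => simpa [zero_vmul] using zero_mem W
    | single_add a x f _ _ ih =>
      rw [add_vmul]
      exact add_mem (single_vmul_gen a x g hg) ih
  | zero => simpa [vmul_zero] using zero_mem W
  | add w1 w2 _ _ h1 h2 => rw [vmul_add]; exact add_mem h1 h2
  | neg w _ h => rw [vmul_neg]; exact neg_mem h
end
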